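/- Let Λ_X and Λ_Y be two-sided shift spaces that are conjugate via a conjugacy H: Λ_X → Λ_Y, and assume (after recoding) that x_{[0,∞)} = x'_{[0,∞)} implies H(x)_{[0,∞)} = H(x')_{[0,∞)} and that y_{[0,∞)} = y'_{[0,∞)} implies H^{-1}(y)_{[ℓ,∞)} = H^{-1}(y')_{[ℓ,∞)} for some ℓ ∈ ℕ. Then the map φ: X → Y defined by φ(x_{[0,∞)}) = H(x)_{[0,∞)} is a well-defined surjective sliding block code which is almost injective with lag ℓ: φ(x) = φ(x') implies σ_X^ℓ(x) = σ_X^ℓ(x'). -/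

import Mathlib

open Function Set

/-- The shift map on one-sided sequences. -/
def shiftMap {A : Type*} : (ℕ → A) → (ℕ → A) := fun x n => x (n + 1)

/-- The two-sided shift map on `A^ℤ`. -/
def shiftZ {A : Type*} : (ℤ → A) → (ℤ → A) := fun x n => x (n + 1)

/-- Restriction of a two-sided sequence to its nonnegative coordinates. -/
def restrictNonneg {A : Type*} : (ℤ → A) → (ℕ → A) := fun x n => x (n : ℤ)

/-!
Since `H` maps equal right halves to equal right halves, `φ` is well defined on `X`,
and it inherits shift-equivariance from `H`. Restriction `Λ_X → X` is a continuous
surjection from a compact space onto a Hausdorff one, hence a quotient map, so `φ` is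
continuous. Surjectivity comes from `H ∘ H⁻¹ = id`, and the lag from applying `H⁻¹` to
two points whose images have the same right half.
-/

section

variable {A : Type*}

lemma continuous_restrictNonneg [TopologicalSpace A] :
    Continuous (restrictNonneg : (ℤ → A) → (ℕ → A)) :=
  continuous_pi fun n => continuous_apply (n : ℤ)

lemma restrictNonneg_shiftZ (x : ℤ → A) :
    restrictNonneg (shiftZ x) = shiftMap (restrictNonneg x) :=
  rfl

lemma shiftMap_iterate_apply (u : ℕ → A) (k n : ℕ) : shiftMap^[k] u n = u (n + k) := by
  induction k generalizing u with
  | zero => rfl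
  | succ k ih => rw [iterate_succ_apply, ih]; rfl

lemma shiftMap_iterate_restrictNonneg_eq {x x' : ℤ → A} {ℓ : ℕ}
    (h : ∀ n : ℤ, (ℓ : ℤ) ≤ n → x n = x' n) :
    shiftMap^[ℓ] (restrictNonneg x) = shiftMap^[ℓ] (restrictNonneg x') := by
  funext n
  simp only [shiftMap_iterate_apply]
  exact h _ (by omega)

end

theorem continuousOn_extend_of_factorsThrough {K α β : Type*} [TopologicalSpace K]
    [CompactSpace K] [TopologicalSpace α] [T2Space α] [TopologicalSpace β]
    {p : K → α} {g : K → β} (hp : Continuous p) (hg : Continuous g)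
    (hgp : FactorsThrough g p) (e' : α → β) :
    ContinuousOn (extend p g e') (range p) := by
  have hq : Topology.IsQuotientMap (rangeFactorization p) :=
    hp.rangeFactorization.isClosedMap.isQuotientMap hp.rangeFactorization
      rangeFactorization_surjective
  rw [continuousOn_iff_continuous_domRestrict, hq.continuous_iff]
  convert hg
  funext a
  exact hgp.extend_apply e' a

theorem conjugacy_induces_sliding_block_code_general {A B : Type*} [Fintype A]
    [TopologicalSpace A] [DiscreteTopology A] [TopologicalSpace B]
    (ΛX : Set (ℤ → A)) (ΛY : Set (ℤ → B))
    (hΛXc : IsClosed ΛX) (hΛXi : ∀ x : ℤ → A, x ∈ ΛX ↔ shiftZ x ∈ ΛX)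
    (H : (ℤ → A) → (ℤ → B)) (H' : (ℤ → B) → (ℤ → A))
    (hHm : MapsTo H ΛX ΛY) (hH'm : MapsTo H' ΛY ΛX)
    (hleft : ∀ x ∈ ΛX, H' (H x) = x) (hright : ∀ y ∈ ΛY, H (H' y) = y)
    (hHc : ContinuousOn H ΛX)
    (hHe : ∀ x ∈ ΛX, H (shiftZ x) = shiftZ (H x))
    (ℓ : ℕ)
    (hfwd : ∀ x ∈ ΛX, ∀ x' ∈ ΛX, (∀ n : ℕ, x (n : ℤ) = x' (n : ℤ)) →
      ∀ n : ℕ, H x (n : ℤ) = H x' (n : ℤ))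
    (hbwd : ∀ y ∈ ΛY, ∀ y' ∈ ΛY, (∀ n : ℕ, y (n : ℤ) = y' (n : ℤ)) →
      ∀ n : ℤ, (ℓ : ℤ) ≤ n → H' y n = H' y' n) :
    ∃ φ : (ℕ → A) → (ℕ → B),
      (∀ x ∈ ΛX, φ (restrictNonneg x) = restrictNonneg (H x)) ∧
      MapsTo φ (restrictNonneg '' ΛX) (restrictNonneg '' ΛY) ∧
      SurjOn φ (restrictNonneg '' ΛX) (restrictNonneg '' ΛY) ∧
      ContinuousOn φ (restrictNonneg '' ΛX) ∧
      (∀ x ∈ restrictNonneg '' ΛX, φ (shiftMap x) = shiftMap (φ x)) ∧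
      (∀ x ∈ restrictNonneg '' ΛX, ∀ x' ∈ restrictNonneg '' ΛX,
        φ x = φ x' → shiftMap^[ℓ] x = shiftMap^[ℓ] x') := by
  have hfactor : FactorsThrough (ΛX.domRestrict (restrictNonneg ∘ H)) (ΛX.domRestrict restrictNonneg) :=
    fun x x' h => funext (hfwd x x.2 x' x'.2 (congrFun h))
  -- off `X` the value of `φ` is irrelevant; `H` itself supplies one
  let φ := extend (ΛX.domRestrict restrictNonneg) (ΛX.domRestrict (restrictNonneg ∘ H))
    fun u => restrictNonneg (H fun n => u n.toNat)
  have hφ : ∀ x ∈ ΛX, φ (restrictNonneg x) = restrictNonneg (H x) :=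
    fun x hx => hfactor.extend_apply _ ⟨x, hx⟩
  refine ⟨φ, hφ, ?maps, ?surj, ?cont, ?shift, ?lag⟩
  case maps =>
    rintro _ ⟨x, hx, rfl⟩
    rw [hφ x hx]
    exact mem_image_of_mem _ (hHm hx)
  case surj =>
    rintro _ ⟨y, hy, rfl⟩
    exact ⟨_, mem_image_of_mem _ (hH'm hy), by rw [hφ _ (hH'm hy), hright y hy]⟩
  case cont =>
    have : CompactSpace ΛX := isCompact_iff_compactSpace.mp hΛXc.isCompact
    rw [← range_domRestrict]
    exact continuousOn_extend_of_factorsThrough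
      (continuous_restrictNonneg.comp continuous_subtype_val)
      (continuous_restrictNonneg.comp hHc.domRestrict) hfactor _
  case shift =>
    rintro _ ⟨x, hx, rfl⟩
    rw [← restrictNonneg_shiftZ, hφ _ ((hΛXi x).1 hx), hφ x hx, hHe x hx,
      restrictNonneg_shiftZ]
  case lag =>
    rintro _ ⟨x, hx, rfl⟩ _ ⟨x', hx', rfl⟩ hxx'
    rw [hφ x hx, hφ x' hx'] at hxx'
    refine shiftMap_iterate_restrictNonneg_eq fun n hn => ?_
    rw [← hleft x hx, ← hleft x' hx']
    exact hbwd _ (hHm hx) _ (hHm hx') (congrFun hxx') n hn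

/-- If `H : Λ_X → Λ_Y` is a conjugacy of two-sided shift spaces such that
`x_{[0,∞)} = x'_{[0,∞)}` implies `H(x)_{[0,∞)} = H(x')_{[0,∞)}` and
`y_{[0,∞)} = y'_{[0,∞)}` implies `H⁻¹(y)_{[ℓ,∞)} = H⁻¹(y')_{[ℓ,∞)}`, then
`φ(x_{[0,∞)}) = H(x)_{[0,∞)}` is a well-defined surjective sliding block code
from `X` to `Y` which is almost injective with lag `ℓ`. -/
theorem conjugacy_induces_sliding_block_code {A B : Type*} [Fintype A]
    [TopologicalSpace A] [DiscreteTopology A] [Fintype B] [TopologicalSpace B]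
    [DiscreteTopology B]
    (ΛX : Set (ℤ → A)) (ΛY : Set (ℤ → B))
    (hΛXc : IsClosed ΛX) (hΛXi : ∀ x : ℤ → A, x ∈ ΛX ↔ shiftZ x ∈ ΛX)
    (hΛYc : IsClosed ΛY) (hΛYi : ∀ y : ℤ → B, y ∈ ΛY ↔ shiftZ y ∈ ΛY)
    (H : (ℤ → A) → (ℤ → B)) (H' : (ℤ → B) → (ℤ → A))
    (hHm : MapsTo H ΛX ΛY) (hH'm : MapsTo H' ΛY ΛX)
    (hleft : ∀ x ∈ ΛX, H' (H x) = x) (hright : ∀ y ∈ ΛY, H (H' y) = y)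
    (hHc : ContinuousOn H ΛX) (hH'c : ContinuousOn H' ΛY)
    (hHe : ∀ x ∈ ΛX, H (shiftZ x) = shiftZ (H x))
    (ℓ : ℕ)
    (hfwd : ∀ x ∈ ΛX, ∀ x' ∈ ΛX, (∀ n : ℕ, x (n : ℤ) = x' (n : ℤ)) →
      ∀ n : ℕ, H x (n : ℤ) = H x' (n : ℤ))
    (hbwd : ∀ y ∈ ΛY, ∀ y' ∈ ΛY, (∀ n : ℕ, y (n : ℤ) = y' (n : ℤ)) →
      ∀ n : ℤ, (ℓ : ℤ) ≤ n → H' y n = H' y' n) :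
    ∃ φ : (ℕ → A) → (ℕ → B),
      (∀ x ∈ ΛX, φ (restrictNonneg x) = restrictNonneg (H x)) ∧
      MapsTo φ (restrictNonneg '' ΛX) (restrictNonneg '' ΛY) ∧
      SurjOn φ (restrictNonneg '' ΛX) (restrictNonneg '' ΛY) ∧
      ContinuousOn φ (restrictNonneg '' ΛX) ∧
      (∀ x ∈ restrictNonneg '' ΛX, φ (shiftMap x) = shiftMap (φ x)) ∧
      (∀ x ∈ restrictNonneg '' ΛX, ∀ x' ∈ restrictNonneg '' ΛX,
        φ x = φ x' → shiftMap^[ℓ] x = shiftMap^[ℓ] x') :=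
  conjugacy_induces_sliding_block_code_general ΛX ΛY hΛXc hΛXi H H' hHm hH'm hleft hright hHc hHe ℓ
    hfwd hbwd
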